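/- For every integer Q ≥ 1 and every real t with Q/(Q+1) < t ≤ 1, the point (t, t/Q) ∈ Ω is T-periodic with minimal period P(t, t/Q) = N(Q). -/

import Mathlib

noncomputable section

/-- The Farey triangle `Ω = {(a,b) : 0 < a ≤ 1, 0 < b ≤ 1, a + b > 1}`. -/
def FareyTriangle : Set (ℝ × ℝ) :=
  {p | 0 < p.1 ∧ p.1 ≤ 1 ∧ 0 < p.2 ∧ p.2 ≤ 1 ∧ 1 < p.1 + p.2}

/-- The BCZ map `T(a,b) = (b, -a + ⌊(1+a)/b⌋ b)`. -/
def bcz (p : ℝ × ℝ) : ℝ × ℝ :=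
  (p.2, -p.1 + (⌊(1 + p.1) / p.2⌋ : ℝ) * p.2)

/-- `N(Q) = ∑_{q ≤ Q} φ(q)`, the cardinality of the Farey sequence `F(Q)`. -/
def NFarey (Q : ℕ) : ℕ := ∑ q ∈ Finset.Icc 1 Q, Nat.totient q

/-!
Put `c = t / Q`, so that `(t, t / Q) = (Q c, c)` and `⌊1 / c⌋ = Q`. For integers `A` and `a > 0`
the BCZ map sends `(A c, a c)` to `(a c, (k a - A) c)` with `k = ⌊(Q + A) / a⌋`, which is the
next-term rule for the denominators of the Farey sequence `F(Q)`. So the orbit of `(Q c, c)` tracks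
the denominators of consecutive Farey fractions, starting from `-1/Q < 0/1`, and it is first back
when the denominator `1` reappears, at `1/1`. A fraction strictly between two Farey neighbours of
order `Q` has denominator `> Q`, so on its way to `1/1` the walk visits each element of `F(Q)`
exactly once: that takes `N(Q)` steps.
-/

theorem Int.add_le_of_lt_of_lt_of_det_eq_one {P A p a u v : ℤ} (hA : 0 ≤ A) (ha : 0 ≤ a)
    (hdet : p * A - P * a = 1) (h₁ : P * v < u * A) (h₂ : u * a < p * v) : A + a ≤ v := by
  have hv : v = A * (p * v - u * a) + a * (u * A - P * v) := by linear_combination -v * hdet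
  nlinarith

def fareySet (Q : ℕ) : Finset ℚ :=
  (Finset.Icc 1 Q).biUnion fun q =>
    ((Finset.range q).filter q.Coprime).image fun p : ℕ => (p / q : ℚ)

theorem den_natCast_div_natCast {p q : ℕ} (hq : 0 < q) (hpq : q.Coprime p) :
    ((p : ℚ) / q).den = q := by
  have := Rat.den_div_eq_of_coprime (a := p) (b := q) (by exact_mod_cast hq) hpq.symm
  rw [Int.cast_natCast, Int.cast_natCast] at this
  exact_mod_cast this

theorem mem_fareySet {Q : ℕ} {r : ℚ} : r ∈ fareySet Q ↔ 0 ≤ r ∧ r < 1 ∧ r.den ≤ Q := by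
  simp only [fareySet, Finset.mem_biUnion, Finset.mem_image, Finset.mem_filter, Finset.mem_range,
    Finset.mem_Icc]
  constructor
  · rintro ⟨q, ⟨hq, hqQ⟩, p, ⟨hpq, hcop⟩, rfl⟩
    have hq' : (0 : ℚ) < q := by exact_mod_cast hq
    refine ⟨by positivity, (div_lt_one hq').2 (by exact_mod_cast hpq), ?_⟩
    rw [den_natCast_div_natCast hq hcop]
    exact hqQ
  · rintro ⟨hr0, hr1, hrQ⟩
    have hnum : (r.num.toNat : ℤ) = r.num := Int.toNat_of_nonneg (Rat.num_nonneg.2 hr0)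
    refine ⟨r.den, ⟨r.den_pos, hrQ⟩, r.num.toNat, ⟨?_, ?_⟩, ?_⟩
    · have := Rat.num_lt_denom_iff.2 hr1
      omega
    · have : r.num.natAbs = r.num.toNat := by omega
      rw [← this]
      exact r.reduced.symm
    · rw [← Int.cast_natCast, hnum, Rat.num_div_den]

theorem card_fareySet (Q : ℕ) : (fareySet Q).card = NFarey Q := by
  rw [fareySet, Finset.card_biUnion]
  · refine Finset.sum_congr rfl fun q hq => ?_
    have hq : (q : ℚ) ≠ 0 := by have := (Finset.mem_Icc.1 hq).1; positivity
    rw [Nat.totient_eq_card_coprime, Finset.card_image_of_injective]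
    intro p p' h
    exact_mod_cast (div_left_inj' hq).1 h
  · intro q hq q' hq' hne
    simp only [Function.onFun, Finset.disjoint_left, Finset.mem_image, Finset.mem_filter]
    rintro r ⟨p, ⟨-, hp⟩, rfl⟩ ⟨p', ⟨-, hp'⟩, h⟩
    apply hne
    rw [← den_natCast_div_natCast (Finset.mem_Icc.1 hq).1 hp,
      ← den_natCast_div_natCast (Finset.mem_Icc.1 hq').1 hp', h]

structure FareyPair where
  prevNum : ℤ
  prevDen : ℤ
  num : ℤ
  den : ℤ

namespace FareyPair

variable {Q : ℕ} {s : FareyPair}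

/-- The next-term rule of Farey sequences: in `F(Q)` the successor of `num/den`, preceded by
`prevNum/prevDen`, is `(k num - prevNum)/(k den - prevDen)` with `k = ⌊(Q + prevDen)/den⌋`. -/
def next (Q : ℕ) (s : FareyPair) : FareyPair :=
  let k := ((Q : ℤ) + s.prevDen) / s.den
  ⟨s.num, s.den, k * s.num - s.prevNum, k * s.den - s.prevDen⟩

def prevFrac (s : FareyPair) : ℚ := s.prevNum / s.prevDen

def frac (s : FareyPair) : ℚ := s.num / s.den

theorem prevFrac_next : (s.next Q).prevFrac = s.frac := rfl

structure IsAdjacent (Q : ℕ) (s : FareyPair) : Prop where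
  one_le_den : 1 ≤ s.den
  den_le : s.den ≤ Q
  prevDen_le : s.prevDen ≤ Q
  lt_prevDen_add_den : Q < s.prevDen + s.den
  det : s.num * s.prevDen - s.prevNum * s.den = 1

namespace IsAdjacent

theorem next (h : s.IsAdjacent Q) : (s.next Q).IsAdjacent Q := by
  have ha : 0 < s.den := by linarith [h.one_le_den]
  have hk₁ := Int.ediv_mul_le ((Q : ℤ) + s.prevDen) ha.ne'
  have hk₂ := Int.lt_ediv_add_one_mul_self ((Q : ℤ) + s.prevDen) ha
  exact
    { one_le_den := by dsimp [FareyPair.next]; linarith [h.den_le]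
      den_le := by dsimp [FareyPair.next]; linarith
      prevDen_le := h.den_le
      lt_prevDen_add_den := by dsimp [FareyPair.next]; linarith
      det := by dsimp [FareyPair.next]; linear_combination h.det }

theorem prevDen_pos (h : s.IsAdjacent Q) : 0 < s.prevDen := by
  linarith [h.den_le, h.lt_prevDen_add_den]

theorem prevFrac_lt_frac (h : s.IsAdjacent Q) : s.prevFrac < s.frac := by
  have hA : (0 : ℚ) < s.prevDen := by exact_mod_cast h.prevDen_pos
  have ha : (0 : ℚ) < s.den := by exact_mod_cast h.one_le_den
  rw [prevFrac, frac, div_lt_div_iff₀ hA ha]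
  exact_mod_cast (by linarith [h.det] : s.prevNum * s.den < s.num * s.prevDen)

theorem lt_den_of_mem_Ioo (h : s.IsAdjacent Q) {r : ℚ} (hr : r ∈ Set.Ioo s.prevFrac s.frac) :
    Q < r.den := by
  have hA : (0 : ℚ) < s.prevDen := by exact_mod_cast h.prevDen_pos
  have ha : (0 : ℚ) < s.den := by exact_mod_cast h.one_le_den
  have hv : (0 : ℚ) < r.den := by exact_mod_cast r.den_pos
  obtain ⟨h₁, h₂⟩ := hr
  rw [prevFrac, ← r.num_div_den, div_lt_div_iff₀ hA hv] at h₁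
  rw [frac, ← r.num_div_den, div_lt_div_iff₀ hv ha] at h₂
  have := Int.add_le_of_lt_of_lt_of_det_eq_one h.prevDen_pos.le (by linarith [h.one_le_den]) h.det
    (by exact_mod_cast h₁) (by exact_mod_cast h₂)
  have := h.lt_prevDen_add_den
  omega

theorem den_frac_le (h : s.IsAdjacent Q) : s.frac.den ≤ Q := by
  have hdvd : (s.frac.den : ℤ) ∣ s.den := by
    rw [frac, ← Rat.divInt_eq_div]; exact Rat.den_dvd _ _
  have := Int.le_of_dvd (by linarith [h.one_le_den]) hdvd
  have := h.den_le
  omega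

theorem den_eq_one_iff (h : s.IsAdjacent Q) : s.den = 1 ↔ ∃ m : ℤ, s.frac = m := by
  refine ⟨fun h1 => ⟨s.num, by simp [frac, h1]⟩, ?_⟩
  rintro ⟨m, hm⟩
  have ha : (s.den : ℚ) ≠ 0 := by exact_mod_cast (by linarith [h.one_le_den] : s.den ≠ 0)
  rw [frac, div_eq_iff ha] at hm
  have hnum : s.num = m * s.den := by exact_mod_cast hm
  exact Int.eq_one_of_mul_eq_one_left (by linarith [h.one_le_den])
    (by linear_combination h.det - s.prevDen * hnum : (m * s.prevDen - s.prevNum) * s.den = 1)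

end IsAdjacent

/-- `-1/Q < 0/1` are neighbours among all fractions of denominator at most `Q`, so the walk can
start there and reach `F(Q)` at once. -/
def start (Q : ℕ) : FareyPair := ⟨-1, Q, 0, 1⟩

theorem isAdjacent_start (hQ : 1 ≤ Q) : (start Q).IsAdjacent Q where
  one_le_den := le_rfl
  den_le := by simp [start]; exact_mod_cast hQ
  prevDen_le := le_rfl
  lt_prevDen_add_den := by simp [start]
  det := by simp [start]

def walk (Q n : ℕ) : FareyPair := (next Q)^[n] (start Q)

theorem walk_zero : walk Q 0 = start Q := rfl

theorem walk_succ (n : ℕ) : walk Q (n + 1) = (walk Q n).next Q :=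
  Function.iterate_succ_apply' _ _ _

theorem isAdjacent_walk (hQ : 1 ≤ Q) (n : ℕ) : (walk Q n).IsAdjacent Q := by
  induction n with
  | zero => exact isAdjacent_start hQ
  | succ n ih => rw [walk_succ]; exact ih.next

theorem frac_walk_zero : (walk Q 0).frac = 0 := by simp [walk_zero, start, frac]

theorem frac_walk_strictMono (hQ : 1 ≤ Q) : StrictMono fun n => (walk Q n).frac :=
  strictMono_nat_of_lt_succ fun n => by
    simpa only [walk_succ, prevFrac_next] using (isAdjacent_walk hQ (n + 1)).prevFrac_lt_frac

theorem frac_walk_nonneg (hQ : 1 ≤ Q) (n : ℕ) : 0 ≤ (walk Q n).frac :=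
  frac_walk_zero (Q := Q) ▸ (frac_walk_strictMono hQ).monotone n.zero_le

theorem frac_walk_succ_le (hQ : 1 ≤ Q) {n : ℕ} {r : ℚ} (hr : (walk Q n).frac < r)
    (hden : r.den ≤ Q) : (walk Q (n + 1)).frac ≤ r := by
  by_contra! h
  have := (isAdjacent_walk hQ (n + 1)).lt_den_of_mem_Ioo
    ⟨by rwa [walk_succ, prevFrac_next], h⟩
  omega

theorem frac_walk_mem_fareySet_iff (hQ : 1 ≤ Q) (n : ℕ) :
    (walk Q n).frac ∈ fareySet Q ↔ (walk Q n).frac < 1 := by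
  simp [mem_fareySet, frac_walk_nonneg hQ n, (isAdjacent_walk hQ n).den_frac_le]

theorem exists_one_le_frac_walk (hQ : 1 ≤ Q) : ∃ n, 1 ≤ (walk Q n).frac := by
  by_contra! h
  have hmaps : Set.MapsTo (fun n => (walk Q n).frac) (Finset.range (NFarey Q + 1)) (fareySet Q) :=
    fun n _ => (frac_walk_mem_fareySet_iff hQ n).2 (h n)
  have := Finset.card_le_card_of_injOn _ hmaps (frac_walk_strictMono hQ).injective.injOn
  rw [Finset.card_range, card_fareySet] at this
  omega

theorem image_frac_walk_range {M : ℕ} (hQ : 1 ≤ Q) (hM : ∀ n, (walk Q n).frac < 1 ↔ n < M) :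
    (Finset.range M).image (fun n => (walk Q n).frac) = fareySet Q := by
  ext r
  simp only [Finset.mem_image, Finset.mem_range]
  constructor
  · rintro ⟨n, hn, rfl⟩
    exact (frac_walk_mem_fareySet_iff hQ n).2 ((hM n).2 hn)
  · intro hr
    obtain ⟨hr0, hr1, hrQ⟩ := mem_fareySet.1 hr
    have hM1 : 1 ≤ (walk Q M).frac := not_lt.1 fun h => lt_irrefl M ((hM M).1 h)
    have hex : ∃ n, r < (walk Q n).frac := ⟨M, hr1.trans_le hM1⟩
    obtain ⟨n, hn⟩ : ∃ n, Nat.find hex = n + 1 := Nat.exists_eq_succ_of_ne_zero fun h0 => by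
      have := Nat.find_spec hex
      rw [h0, frac_walk_zero] at this
      exact this.not_ge hr0
    have hle : (walk Q n).frac ≤ r := not_lt.1 (Nat.find_min hex (by omega))
    refine ⟨n, (hM n).1 (lt_of_le_of_lt hle hr1), hle.antisymm ?_⟩
    by_contra! hlt
    exact (frac_walk_succ_le hQ hlt hrQ).not_gt (hn ▸ Nat.find_spec hex)

theorem frac_walk_lt_one_iff (hQ : 1 ≤ Q) (n : ℕ) : (walk Q n).frac < 1 ↔ n < NFarey Q := by
  have hex := exists_one_le_frac_walk hQ
  have hM : ∀ n, (walk Q n).frac < 1 ↔ n < Nat.find hex := fun n =>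
    ⟨fun h => not_le.1 fun hle =>
        h.not_ge ((Nat.find_spec hex).trans ((frac_walk_strictMono hQ).monotone hle)),
      fun h => not_le.1 (Nat.find_min hex h)⟩
  rw [hM, ← card_fareySet, ← image_frac_walk_range hQ hM,
    Finset.card_image_of_injective _ (frac_walk_strictMono hQ).injective, Finset.card_range]

theorem nFarey_pos (hQ : 1 ≤ Q) : 0 < NFarey Q :=
  (frac_walk_lt_one_iff hQ 0).1 (frac_walk_zero.trans_lt one_pos)

theorem frac_walk_nFarey (hQ : 1 ≤ Q) : (walk Q (NFarey Q)).frac = 1 := by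
  obtain ⟨n, hn⟩ := Nat.exists_eq_succ_of_ne_zero (nFarey_pos hQ).ne'
  refine le_antisymm ?_ (not_lt.1 ((frac_walk_lt_one_iff hQ _).not.2 (lt_irrefl _)))
  rw [hn]
  exact frac_walk_succ_le hQ ((frac_walk_lt_one_iff hQ n).2 (by omega)) (by simpa using hQ)

theorem den_walk_nFarey (hQ : 1 ≤ Q) : (walk Q (NFarey Q)).den = 1 :=
  (isAdjacent_walk hQ _).den_eq_one_iff.2 ⟨1, by rw [frac_walk_nFarey hQ, Int.cast_one]⟩

theorem den_walk_ne_one (hQ : 1 ≤ Q) {n : ℕ} (hn₀ : 0 < n) (hn : n < NFarey Q) :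
    (walk Q n).den ≠ 1 := by
  rw [Ne, (isAdjacent_walk hQ n).den_eq_one_iff]
  rintro ⟨m, hm⟩
  have h₀ : (0 : ℚ) < m := hm ▸ frac_walk_zero (Q := Q) ▸ frac_walk_strictMono hQ hn₀
  have h₁ : (m : ℚ) < 1 := hm ▸ (frac_walk_lt_one_iff hQ n).2 hn
  have : (0 : ℤ) < m := by exact_mod_cast h₀
  have : m < (1 : ℤ) := by exact_mod_cast h₁
  omega

end FareyPair

section BCZ

variable {Q : ℕ} {c t : ℝ}

theorem bcz_intCast_mul (hc : 0 < c) (hfloor : ⌊c⁻¹⌋ = Q) {A a : ℤ} (ha : 0 < a) :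
    bcz (A * c, a * c) = (a * c, (((Q + A) / a * a - A : ℤ) : ℝ) * c) := by
  have ha' : (0 : ℝ) < a := by exact_mod_cast ha
  have hk : ⌊(1 + A * c) / (a * c)⌋ = ((Q : ℤ) + A) / a := by
    rw [show (1 + A * c) / (a * c) = (c⁻¹ + A) / a by field_simp,
      Int.floor_div_cast_of_nonneg ha.le, Int.floor_add_intCast, hfloor]
  simp only [bcz, hk]
  congr 1
  push_cast
  ring

theorem iterate_bcz_eq_walk (hQ : 1 ≤ Q) (hc : 0 < c) (hfloor : ⌊c⁻¹⌋ = Q) (n : ℕ) :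
    bcz^[n] (Q * c, c) = ((FareyPair.walk Q n).prevDen * c, (FareyPair.walk Q n).den * c) := by
  induction n with
  | zero => simp [FareyPair.walk_zero, FareyPair.start]
  | succ n ih =>
    rw [Function.iterate_succ_apply', ih,
      bcz_intCast_mul hc hfloor (by linarith [(FareyPair.isAdjacent_walk hQ n).one_le_den]),
      FareyPair.walk_succ]
    rfl

theorem isPeriodicPt_bcz_iff (hQ : 1 ≤ Q) (hc : 0 < c) (hfloor : ⌊c⁻¹⌋ = Q) (n : ℕ) :
    Function.IsPeriodicPt bcz n (Q * c, c) ↔ (FareyPair.walk Q n).den = 1 := by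
  have h := FareyPair.isAdjacent_walk hQ n
  rw [Function.IsPeriodicPt, Function.IsFixedPt, iterate_bcz_eq_walk hQ hc hfloor]
  constructor
  · intro heq
    have : ((FareyPair.walk Q n).den : ℝ) = 1 := by
      simpa [hc.ne'] using congrArg Prod.snd heq
    exact_mod_cast this
  · intro h1
    have hA : (FareyPair.walk Q n).prevDen = Q := by
      have := h.prevDen_le; have := h.lt_prevDen_add_den; omega
    simp [hA, h1]

theorem floor_inv_div_eq (hQ : 1 ≤ Q) (ht₁ : (Q : ℝ) / (Q + 1) < t) (ht₂ : t ≤ 1) :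
    ⌊(t / Q)⁻¹⌋ = Q := by
  have hQ' : (0 : ℝ) < Q := by exact_mod_cast hQ
  have ht : 0 < t := (div_pos hQ' (by linarith)).trans ht₁
  rw [inv_div, Int.floor_eq_iff, le_div_iff₀ ht, div_lt_iff₀ ht]
  rw [div_lt_iff₀ (by linarith)] at ht₁
  push_cast
  constructor <;> nlinarith

theorem mem_fareyTriangle (hQ : 1 ≤ Q) (ht₁ : (Q : ℝ) / (Q + 1) < t) (ht₂ : t ≤ 1) :
    (t, t / Q) ∈ FareyTriangle := by
  have hQ' : (1 : ℝ) ≤ Q := by exact_mod_cast hQ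
  have ht : 0 < t := (div_pos (by linarith) (by linarith)).trans ht₁
  rw [div_lt_iff₀ (by linarith)] at ht₁
  refine ⟨ht, ht₂, by positivity, (div_le_one (by linarith)).2 (by linarith), ?_⟩
  show 1 < t + t / Q
  rw [← sub_pos, show t + t / Q - 1 = (t * (Q + 1) - Q) / Q by field_simp]
  exact div_pos (by linarith) (by linarith)

end BCZ

theorem bcz_period_of_farey_segment (Q : ℕ) (hQ : 1 ≤ Q) (t : ℝ)
    (ht1 : (Q : ℝ) / (Q + 1) < t) (ht2 : t ≤ 1) :
    (t, t / Q) ∈ FareyTriangle ∧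
    Function.IsPeriodicPt bcz (NFarey Q) (t, t / Q) ∧
    Function.minimalPeriod bcz (t, t / Q) = NFarey Q := by
  have hQ' : (0 : ℝ) < Q := by exact_mod_cast hQ
  have hc : 0 < t / Q := div_pos ((div_pos hQ' (by linarith)).trans ht1) hQ'
  have hpt : (t, t / Q) = ((Q : ℝ) * (t / Q), t / Q) := by rw [mul_div_cancel₀ _ hQ'.ne']
  have hper : ∀ n, Function.IsPeriodicPt bcz n (t, t / Q) ↔ (FareyPair.walk Q n).den = 1 :=
    hpt ▸ isPeriodicPt_bcz_iff hQ hc (floor_inv_div_eq hQ ht1 ht2)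
  have hN : Function.IsPeriodicPt bcz (NFarey Q) (t, t / Q) :=
    (hper _).2 (FareyPair.den_walk_nFarey hQ)
  have hN₀ := FareyPair.nFarey_pos hQ
  refine ⟨mem_fareyTriangle hQ ht1 ht2, hN, (hN.minimalPeriod_le hN₀).antisymm ?_⟩
  by_contra! h
  exact FareyPair.den_walk_ne_one hQ (hN.minimalPeriod_pos hN₀) h
    ((hper _).1 (Function.isPeriodicPt_minimalPeriod _ _))
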